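/- For every integer k ≥ 0, the space of R^2-valued polynomial vector fields of degree at most k decomposes as the direct sum of the vector-rot images rot(P_{k+1}) (where rot v = (∂v/∂y, -∂v/∂x)) and the space x·P_{k-1} of fields of the form x p with p of degree at most k−1. -/

import Mathlib

open MvPolynomial

/-- `degLE p k` means `p ∈ P_k` where `k : ℤ` and `P_{-1} = {0}`. -/
def degLE2 (p : MvPolynomial (Fin 2) ℝ) (k : ℤ) : Prop :=
  p = 0 ∨ (p.totalDegree : ℤ) ≤ k

/-- the vector rot `(∂φ/∂y, -∂φ/∂x)` of a bivariate polynomial -/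
noncomputable def brot2 (φ : MvPolynomial (Fin 2) ℝ) : Fin 2 → MvPolynomial (Fin 2) ℝ :=
  ![pderiv 1 φ, -(pderiv 0 φ)]

/-- the field `x p = (x₁ p, x₂ p)` -/
noncomputable def xmul2 (p : MvPolynomial (Fin 2) ℝ) : Fin 2 → MvPolynomial (Fin 2) ℝ :=
  ![X 0 * p, X 1 * p]

namespace DecompAux

noncomputable def scaled (s : MvPolynomial (Fin 2) ℝ) (α : (Fin 2 →₀ ℕ) → ℝ) :
    MvPolynomial (Fin 2) ℝ :=
  ∑ m ∈ s.support, monomial m (α m * coeff m s)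

lemma coeff_scaled (s : MvPolynomial (Fin 2) ℝ) (α : (Fin 2 →₀ ℕ) → ℝ) (n : Fin 2 →₀ ℕ) :
    coeff n (scaled s α) = α n * coeff n s := by
  rw [scaled, coeff_sum]
  rw [Finset.sum_eq_single n (fun m _ hmn => by simp [coeff_monomial, hmn])
      (fun hn => by simp [notMem_support_iff.mp hn])]
  simp [coeff_monomial]

lemma support_scaled (s : MvPolynomial (Fin 2) ℝ) (α : (Fin 2 →₀ ℕ) → ℝ) :
    (scaled s α).support ⊆ s.support := by
  intro n hn
  rw [mem_support_iff] at hn ⊢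
  intro h
  rw [coeff_scaled, h, mul_zero] at hn
  exact hn rfl

lemma coeff_pderiv (i : Fin 2) (f : MvPolynomial (Fin 2) ℝ) (m : Fin 2 →₀ ℕ) :
    coeff m (pderiv i f) = ((m i : ℝ) + 1) * coeff (m + Finsupp.single i 1) f := by
  induction f using MvPolynomial.induction_on' with
  | monomial s a =>
    rw [pderiv_monomial]
    by_cases h : s = m + Finsupp.single i 1
    · subst h
      rw [coeff_monomial, coeff_monomial, if_pos rfl, if_pos (by rw [add_tsub_cancel_right])]
      simp [Finsupp.add_apply, Finsupp.single_eq_same]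
      ring
    · rw [coeff_monomial, coeff_monomial, if_neg h, mul_zero]
      by_cases h2 : s - Finsupp.single i 1 = m
      · rw [if_pos h2]
        have hs : s i = 0 := by
          by_contra hsi
          apply h
          rw [← h2, tsub_add_cancel_of_le]
          rwa [Finsupp.single_le_iff, Nat.one_le_iff_ne_zero]
        rw [hs]; simp
      · rw [if_neg h2]
  | add p q hp hq => simp [coeff_add, hp, hq, mul_add]

lemma uniq_aux (r ψ : MvPolynomial (Fin 2) ℝ) (h0 : X 0 * r = pderiv 1 ψ)
    (h1 : X 1 * r = -(pderiv 0 ψ)) : r = 0 := by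
  ext m
  have e0 := congrArg (fun f => coeff m (pderiv 0 f)) h0
  have e1 := congrArg (fun f => coeff m (pderiv 1 f)) h1
  simp only [coeff_pderiv, map_neg, coeff_neg] at e0 e1
  rw [show m + Finsupp.single (0:Fin 2) 1 = Finsupp.single (0:Fin 2) 1 + m from add_comm _ _] at e0
  rw [show m + Finsupp.single (1:Fin 2) 1 = Finsupp.single (1:Fin 2) 1 + m from add_comm _ _] at e1
  rw [coeff_X_mul] at e0 e1
  have a10 : Finsupp.single (0:Fin 2) 1 1 = 0 := Finsupp.single_eq_of_ne (by decide)
  have a01 : Finsupp.single (1:Fin 2) 1 0 = 0 := Finsupp.single_eq_of_ne (by decide)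
  simp only [Finsupp.add_apply, a10, a01, zero_add] at e0 e1
  rw [show Finsupp.single (1:Fin 2) 1 + m + Finsupp.single (0:Fin 2) 1
      = Finsupp.single (0:Fin 2) 1 + m + Finsupp.single (1:Fin 2) 1 by abel] at e1
  set c := coeff (Finsupp.single (0:Fin 2) 1 + m + Finsupp.single (1:Fin 2) 1) ψ with hc
  have ha : ((m 0 : ℝ)+1) ≠ 0 := by positivity
  have hb : ((m 1 : ℝ)+1) ≠ 0 := by positivity
  rw [← mul_neg] at e1
  have e0' := mul_left_cancel₀ ha e0
  have e1' := mul_left_cancel₀ hb e1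
  have hc0 : c = 0 := by
    rw [e0'] at e1'
    nlinarith [e1']
  rw [coeff_zero, e0', hc0, mul_zero]

def wt (m : Fin 2 →₀ ℕ) : ℕ := m 0 + m 1

lemma wt_add_single (m : Fin 2 →₀ ℕ) (i : Fin 2) :
    wt (m + Finsupp.single i 1) = wt m + 1 := by
  simp only [wt, Finsupp.add_apply]
  fin_cases i <;> simp [Finsupp.single_apply] <;> ring

lemma wt_eq (m : Fin 2 →₀ ℕ) : ∀ i j : Fin 2, i ≠ j → m i + m j = wt m
  | 0, 1, _ => rfl
  | 1, 0, _ => add_comm _ _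
  | 0, 0, h => absurd rfl h
  | 1, 1, h => absurd rfl h

lemma ex (i j : Fin 2) (hij : i ≠ j) (v0 v1 : MvPolynomial (Fin 2) ℝ) :
    pderiv j (scaled (X j * v0 - X i * v1) (fun m => ((wt m : ℝ))⁻¹))
      + X i * scaled (pderiv i v0 + pderiv j v1) (fun m => ((wt m : ℝ) + 2)⁻¹) = v0 := by
  have hji : j ≠ i := hij.symm
  ext m
  rw [coeff_add, coeff_pderiv, coeff_scaled, coeff_sub]
  by_cases hm : m i = 0
  · rw [show m + Finsupp.single j 1 = Finsupp.single j 1 + m from add_comm _ _]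
    rw [coeff_X_mul]
    rw [coeff_X_mul' (Finsupp.single j 1 + m) i, if_neg (by
      simp [Finsupp.mem_support_iff, Finsupp.add_apply, Finsupp.single_eq_of_ne' hji, hm])]
    rw [coeff_X_mul' m i, if_neg (by simp [Finsupp.mem_support_iff, hm])]
    rw [show wt (Finsupp.single j 1 + m) = m j + 1 by
      rw [add_comm, wt_add_single, ← wt_eq m i j hij, hm, zero_add]]
    have h1 : ((m j : ℝ) + 1) ≠ 0 := by positivity
    rw [sub_zero, add_zero]
    push_cast
    field_simp
  · obtain ⟨n, rfl⟩ : ∃ n, m = n + Finsupp.single i 1 :=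
      ⟨m - Finsupp.single i 1, (tsub_add_cancel_of_le (Finsupp.single_le_iff.mpr
        (Nat.one_le_iff_ne_zero.mpr hm))).symm⟩
    rw [show wt (n + Finsupp.single i 1 + Finsupp.single j 1) = wt n + 2 by
      rw [wt_add_single, wt_add_single]]
    rw [show (n + Finsupp.single i 1 : Fin 2 →₀ ℕ) j = n j by
      rw [Finsupp.add_apply, Finsupp.single_eq_of_ne' hij, add_zero]]
    rw [show n + Finsupp.single i 1 + Finsupp.single j 1
        = Finsupp.single j 1 + (n + Finsupp.single i 1) from add_comm _ _]
    rw [coeff_X_mul]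
    rw [show Finsupp.single j 1 + (n + Finsupp.single i 1)
        = Finsupp.single i 1 + (n + Finsupp.single j 1) by abel]
    rw [coeff_X_mul]
    rw [show n + Finsupp.single i 1 = Finsupp.single i 1 + n from add_comm _ _]
    rw [coeff_X_mul, coeff_scaled, coeff_add, coeff_pderiv, coeff_pderiv]
    rw [show n + Finsupp.single i 1 = Finsupp.single i 1 + n from add_comm _ _]
    have hwt : (wt n : ℝ) = (n i : ℝ) + (n j : ℝ) := by
      rw [← wt_eq n i j hij]; push_cast; ring
    have hne : ((n i : ℝ) + (n j : ℝ) + 2) ≠ 0 := by positivity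
    push_cast
    rw [hwt]
    field_simp
    ring

lemma sum_eq_wt (m : Fin 2 →₀ ℕ) : (m.sum fun _ e => e) = wt m := by
  rw [Finsupp.sum_fintype _ _ (fun _ => rfl), Fin.sum_univ_two]; rfl

lemma totalDegree_scaled_le (s : MvPolynomial (Fin 2) ℝ) (α : (Fin 2 →₀ ℕ) → ℝ) :
    (scaled s α).totalDegree ≤ s.totalDegree :=
  totalDegree_le_of_support_subset (support_scaled s α)

end DecompAux

open DecompAux in
/-- `(P_k)² = rot(P_{k+1}) ⊕ x P_{k-1}` (direct sum decomposition). -/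
theorem decomp_Pk2_rot_x (k : ℕ) (v : Fin 2 → MvPolynomial (Fin 2) ℝ)
    (hv : ∀ i, (v i).totalDegree ≤ k) :
    ∃! gw : (Fin 2 → MvPolynomial (Fin 2) ℝ) × (Fin 2 → MvPolynomial (Fin 2) ℝ),
      (∃ φ : MvPolynomial (Fin 2) ℝ, φ.totalDegree ≤ k + 1 ∧ gw.1 = brot2 φ) ∧
      (∃ p : MvPolynomial (Fin 2) ℝ, degLE2 p ((k : ℤ) - 1) ∧ gw.2 = xmul2 p) ∧
      v = gw.1 + gw.2 := by
  classical
  set q : MvPolynomial (Fin 2) ℝ := X 1 * v 0 - X 0 * v 1 with hq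
  set s : MvPolynomial (Fin 2) ℝ := pderiv 0 (v 0) + pderiv 1 (v 1) with hs
  set φ : MvPolynomial (Fin 2) ℝ := scaled q (fun m => ((wt m : ℝ))⁻¹) with hφ
  set p : MvPolynomial (Fin 2) ℝ := scaled s (fun m => ((wt m : ℝ) + 2)⁻¹) with hp
  have h0 : pderiv 1 φ + X 0 * p = v 0 := ex 0 1 (by decide) (v 0) (v 1)
  have h1 : -(pderiv 0 φ) + X 1 * p = v 1 := by
    have h := ex 1 0 (by decide) (v 1) (v 0)
    rw [show X 0 * v 1 - X 1 * v 0 = -q by rw [hq]; ring] at h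
    rw [show scaled (-q) (fun m => ((wt m : ℝ))⁻¹) = -φ by
      ext n; rw [coeff_neg, hφ, coeff_scaled, coeff_scaled, coeff_neg, mul_neg]] at h
    rw [map_neg] at h
    rw [show pderiv 1 (v 1) + pderiv 0 (v 0) = s from add_comm _ _] at h
    exact h
  have hvsum : v = brot2 φ + xmul2 p := by
    funext i
    fin_cases i
    · simpa [brot2, xmul2] using h0.symm
    · simpa [brot2, xmul2] using h1.symm
  have hφdeg : φ.totalDegree ≤ k + 1 := by
    refine (totalDegree_scaled_le _ _).trans ?_
    refine (totalDegree_sub _ _).trans ?_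
    have d0 := hv 0; have d1 := hv 1
    refine max_le ?_ ?_ <;>
      refine (totalDegree_mul _ _).trans ?_ <;>
      rw [totalDegree_X] <;> omega
  have hsupp : ∀ m ∈ p.support, wt m + 1 ≤ k := by
    intro m hm
    have hms : m ∈ s.support := support_scaled _ _ hm
    rw [mem_support_iff, hs, coeff_add] at hms
    have key : ∀ i : Fin 2, coeff m (pderiv i (v i)) ≠ 0 → wt m + 1 ≤ k := by
      intro i hi
      rw [coeff_pderiv] at hi
      have h2 : coeff (m + Finsupp.single i 1) (v i) ≠ 0 := by
        intro h; rw [h, mul_zero] at hi; exact hi rfl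
      have h3 := le_totalDegree (mem_support_iff.mpr h2)
      rw [sum_eq_wt, wt_add_single] at h3
      exact h3.trans (hv i)
    by_cases hc : coeff m (pderiv 0 (v 0)) ≠ 0
    · exact key 0 hc
    · push_neg at hc
      rw [hc, zero_add] at hms
      exact key 1 hms
  have hpdeg : degLE2 p ((k : ℤ) - 1) := by
    by_cases hp0 : p = 0
    · exact Or.inl hp0
    · refine Or.inr ?_
      obtain ⟨m, hm, hsup⟩ := Finset.exists_mem_eq_sup p.support
        (support_nonempty.mpr hp0) (fun m => m.sum fun _ e => e)
      have := hsupp m hm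
      rw [totalDegree, hsup, sum_eq_wt]
      omega
  refine ⟨(brot2 φ, xmul2 p), ⟨⟨φ, hφdeg, rfl⟩, ⟨p, hpdeg, rfl⟩, hvsum⟩, ?_⟩
  rintro ⟨g, w⟩ ⟨⟨φ', hφ', rfl⟩, ⟨p', hp', rfl⟩, hsum⟩
  have heq : brot2 φ' + xmul2 p' = brot2 φ + xmul2 p := hsum.symm.trans hvsum
  have c0 : pderiv 1 φ' + X 0 * p' = pderiv 1 φ + X 0 * p := by
    simpa [brot2, xmul2] using congrFun heq 0
  have c1 : -(pderiv 0 φ') + X 1 * p' = -(pderiv 0 φ) + X 1 * p := by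
    simpa [brot2, xmul2] using congrFun heq 1
  have hr : p' - p = 0 := by
    refine uniq_aux _ (φ - φ') ?_ ?_
    · rw [map_sub]; linear_combination c0
    · rw [map_sub]; linear_combination c1
  have hpp : p' = p := sub_eq_zero.mp hr
  subst hpp
  have hgg : brot2 φ' = brot2 φ := add_right_cancel heq
  rw [hgg]
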